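/- arXiv:1512.01565 — 5 statements merged into one kernel-verified Lean document; each statement's English description precedes it below -/
import Mathlib

section
/- Let Φ(t) = (t, t², ..., tⁿ) be the moment curve in ℝⁿ with n ≥ 2, and for 1 ≤ k ≤ n-1 and t ∈ [0,1] let V_k(t) = span(Φ'(t), Φ''(t), ..., Φ^{(k)}(t)). If V is a linear subspace of ℝⁿ with dim(V) ≤ n-1, and π_V denotes orthogonal projection of ℝⁿ onto V, then the set of t ∈ [0,1] for which there exists a nonzero vector v ∈ V orthogonal to π_V(V_k(t)) in the sense that dim(π_{V_k(t)}(V)) < min(dim V, k) is finite, with at most (n-1)! elements. -/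
/-!
Pairing with the moment curve identifies `w ∈ ℝⁿ` with the polynomial `q_w = ∑ wⱼ X^(j+1)`,
and `⟪w, Φ^(l+1)(t)⟫ = q_w^(l+1)(t)`. Put `m = min (dim V) k`. The derivatives `q_w'`, `w ∈ V`,
form a space of dimension `≥ m` of polynomials of degree `< n`, so it contains `g₁, …, g_m` of
distinct degrees `e₁ < ⋯ < e_m`, say `g_a = q_{v_a}'` with `v_a ∈ V`. Wherever their Wronskian
`det (g_a^(l)(t))_{l < m}` is nonzero, the projections of the `v_a` onto `V_k(t)` are
independent, so the degenerate parameters are roots of the Wronskian. Multiplying row `l` by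
`X^l` makes column `a` of degree `≤ e_a`, with top coefficients
`e_a(e_a - 1)⋯(e_a - l + 1) · lc(g_a)`: a Vandermonde matrix in the `e_a`. Hence the Wronskian
is nonzero, of degree `≤ ∑ (e_a - a) ≤ m (n - m) ≤ (n-1)!`.
-/

open Polynomial

theorem Nat.mul_sub_le_factorial (m n : ℕ) : m * (n + 1 - m) ≤ n.factorial := by
  induction n generalizing m with
  | zero => rcases m with _ | _ | m <;> simp
  | succ n ih =>
    obtain hm | rfl | hm := lt_trichotomy m (n + 1)
    · obtain rfl | hm0 := m.eq_zero_or_pos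
      · simp
      have hsplit : m * (n + 1 + 1 - m) = m * (n + 1 - m) + m := by
        rw [show n + 1 + 1 - m = n + 1 - m + 1 by omega, Nat.mul_succ]
      have := ih m
      have := (Nat.lt_succ_iff.1 hm).trans n.self_le_factorial
      rw [hsplit, Nat.factorial_succ]
      nlinarith
    · simpa using (n + 1).self_le_factorial
    · simp [Nat.sub_eq_zero_of_le hm]

theorem Fin.sum_sub_sum_val_le_of_strictMono {m N : ℕ} {e : Fin m → ℕ} (he : StrictMono e)
    (hN : ∀ a, e a ≤ N) : ∑ a, e a - ∑ a : Fin m, (a : ℕ) ≤ m * (N + 1 - m) := by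
  have hgap : ∀ a : Fin m, e a + (m - 1 - a) ≤ N := fun a => by
    have := Finset.card_le_card_of_injOn e (s := Finset.Ioi a) (t := Finset.Ioc (e a) N)
      (fun b hb => Finset.mem_Ioc.2 ⟨he (Finset.mem_Ioi.1 hb), hN b⟩) he.injective.injOn
    rw [Fin.card_Ioi, Nat.card_Ioc] at this
    have := hN a
    omega
  have : ∑ a, e a ≤ ∑ a : Fin m, ((N + 1 - m) + (a : ℕ)) :=
    Finset.sum_le_sum fun a _ => by have := hgap a; have := a.2; omega
  rw [Finset.sum_add_distrib, Finset.sum_const, Finset.card_univ, Fintype.card_fin,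
    smul_eq_mul] at this
  omega

namespace Polynomial

variable {R : Type*} [CommRing R]

theorem coeff_prod_sum_of_natDegree_le {ι : Type*} (s : Finset ι) (f : ι → R[X]) (d : ι → ℕ)
    (h : ∀ i ∈ s, (f i).natDegree ≤ d i) :
    (∏ i ∈ s, f i).coeff (∑ i ∈ s, d i) = ∏ i ∈ s, (f i).coeff (d i) := by
  induction s using Finset.cons_induction with
  | empty => simp
  | cons a s _ ih =>
    rw [Finset.forall_mem_cons] at h
    rw [Finset.prod_cons, Finset.sum_cons, Finset.prod_cons,
      coeff_mul_add_eq_of_natDegree_le h.1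
        ((natDegree_prod_le _ _).trans (Finset.sum_le_sum h.2)), ih h.2]

theorem coeff_X_pow_mul_iterate_derivative (p : R[X]) (l N : ℕ) :
    (X ^ l * derivative^[l] p).coeff N = N.descFactorial l • p.coeff N := by
  rw [coeff_X_pow_mul']
  split_ifs with hl
  · rw [coeff_iterate_derivative, Nat.sub_add_cancel hl]
  · rw [Nat.descFactorial_eq_zero_iff_lt.2 (not_le.1 hl), zero_smul]

theorem natDegree_X_pow_mul_iterate_derivative_le (p : R[X]) (l : ℕ) :
    (X ^ l * derivative^[l] p).natDegree ≤ p.natDegree :=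
  natDegree_le_iff_coeff_eq_zero.2 fun N hN => by
    rw [coeff_X_pow_mul_iterate_derivative, coeff_eq_zero_of_natDegree_lt hN, smul_zero]

theorem exists_strictMono_natDegree {K : Type*} [Field K] (W : Submodule K K[X])
    (N : ℕ) (hW : ∀ p ∈ W, p.natDegree ≤ N) {m : ℕ} (hm : m ≤ Module.finrank K W) :
    ∃ g : Fin m → K[X], (∀ a, g a ∈ W) ∧ (∀ a, g a ≠ 0) ∧ StrictMono fun a => (g a).natDegree := by
  classical
  let D := (Finset.range (N + 1)).filter fun d => ∃ p ∈ W, p ≠ 0 ∧ p.natDegree = d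
  -- a nonzero `p ∈ W` has a nonzero coefficient at `p.natDegree ∈ D`
  let coeffs : W →ₗ[K] D → K := LinearMap.pi fun d => lcoeff K d ∘ₗ W.subtype
  have hinj : Function.Injective coeffs := by
    refine (injective_iff_map_eq_zero coeffs).2 fun p hp => ?_
    by_contra hp0
    have hpD : (p : K[X]).natDegree ∈ D := Finset.mem_filter.2
      ⟨Finset.mem_range_succ_iff.2 (hW p p.2), p, p.2, by simpa using hp0, rfl⟩
    exact hp0 (by simpa [coeffs] using congrFun hp ⟨_, hpD⟩)
  have hcard : m ≤ D.card := by
    simpa using hm.trans (coeffs.finrank_le_finrank_of_injective hinj)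
  have hD : ∀ a, ∃ p ∈ W, p ≠ 0 ∧ p.natDegree = D.orderEmbOfCardLe hcard a := fun a =>
    (Finset.mem_filter.1 (D.orderEmbOfCardLe_mem hcard a)).2
  choose g hgW hg0 hgdeg using hD
  refine ⟨g, hgW, hg0, fun a b hab => ?_⟩
  simpa [hgdeg] using (D.orderEmbOfCardLe hcard).strictMono hab

end Polynomial

namespace Matrix

variable {ι R : Type*} [Fintype ι] [DecidableEq ι] [CommRing R]

theorem natDegree_det_le_sum (M : Matrix ι ι R[X]) (c : ι → ℕ)
    (h : ∀ i j, (M i j).natDegree ≤ c j) : M.det.natDegree ≤ ∑ j, c j := by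
  rw [det_apply]
  refine natDegree_sum_le_of_forall_le _ _ fun σ _ => ?_
  exact (natDegree_smul_le _ _).trans <| (natDegree_prod_le _ _).trans <|
    Finset.sum_le_sum fun j _ => h _ _

theorem coeff_det_sum_of_natDegree_le (M : Matrix ι ι R[X]) (c : ι → ℕ)
    (h : ∀ i j, (M i j).natDegree ≤ c j) :
    M.det.coeff (∑ j, c j) = (of fun i j => (M i j).coeff (c j)).det := by
  simp only [det_apply, finsetSum_coeff, coeff_smul, of_apply]
  refine Finset.sum_congr rfl fun σ _ => ?_
  rw [coeff_prod_sum_of_natDegree_le _ _ _ fun j _ => h _ _]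

end Matrix

namespace Polynomial

variable {R : Type*} [CommRing R] {m : ℕ}

noncomputable def wronskianMatrix (g : Fin m → R[X]) : Matrix (Fin m) (Fin m) R[X] :=
  .of fun l a => derivative^[l] (g a)

theorem diagonal_X_pow_mul_wronskianMatrix_apply (g : Fin m → R[X]) (l a : Fin m) :
    (Matrix.diagonal (fun l : Fin m => (X : R[X]) ^ (l : ℕ)) * wronskianMatrix g) l a =
      X ^ (l : ℕ) * derivative^[l] (g a) := by
  rw [Matrix.diagonal_mul, wronskianMatrix, Matrix.of_apply]

theorem det_diagonal_X_pow_mul_wronskianMatrix (g : Fin m → R[X]) :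
    (Matrix.diagonal (fun l : Fin m => (X : R[X]) ^ (l : ℕ)) * wronskianMatrix g).det =
      X ^ (∑ l : Fin m, (l : ℕ)) * (wronskianMatrix g).det := by
  rw [Matrix.det_mul, Matrix.det_diagonal, Finset.prod_pow_eq_pow_sum]

theorem coeff_det_diagonal_X_pow_mul_wronskianMatrix (g : Fin m → R[X]) :
    (Matrix.diagonal (fun l : Fin m => (X : R[X]) ^ (l : ℕ)) * wronskianMatrix g).det.coeff
        (∑ a, (g a).natDegree) =
      (∏ a, (g a).leadingCoeff) *
        (Matrix.of fun l a : Fin m => ((g a).natDegree.descFactorial l : R)).det := by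
  rw [Matrix.coeff_det_sum_of_natDegree_le _ _ fun l a => by
    rw [diagonal_X_pow_mul_wronskianMatrix_apply]
    exact natDegree_X_pow_mul_iterate_derivative_le (g a) l, ← Matrix.det_mul_row]
  congr 1
  ext l a
  simp only [Matrix.of_apply]
  rw [diagonal_X_pow_mul_wronskianMatrix_apply, coeff_X_pow_mul_iterate_derivative,
    coeff_natDegree, nsmul_eq_mul, mul_comm]

theorem natDegree_det_wronskianMatrix_le [Nontrivial R] (g : Fin m → R[X]) :
    (wronskianMatrix g).det.natDegree ≤ ∑ a, (g a).natDegree - ∑ a : Fin m, (a : ℕ) := by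
  by_cases h0 : (wronskianMatrix g).det = 0
  · simp [h0]
  have := Matrix.natDegree_det_le_sum
    (Matrix.diagonal (fun l : Fin m => (X : R[X]) ^ (l : ℕ)) * wronskianMatrix g)
    (fun a => (g a).natDegree) fun l a => by
      rw [diagonal_X_pow_mul_wronskianMatrix_apply]
      exact natDegree_X_pow_mul_iterate_derivative_le (g a) l
  rw [det_diagonal_X_pow_mul_wronskianMatrix, natDegree_X_pow_mul _ h0] at this
  omega

variable [IsDomain R] [CharZero R]

theorem det_of_descFactorial_ne_zero {e : Fin m → ℕ} (he : Function.Injective e) :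
    (Matrix.of fun l a : Fin m => ((e a).descFactorial l : R)).det ≠ 0 := by
  rw [← Matrix.det_transpose]
  have hB : (Matrix.of fun l a : Fin m => ((e a).descFactorial l : R)).transpose =
      Matrix.of fun a l : Fin m => (descPochhammer R l).eval (e a : R) := by
    ext a l
    exact (descPochhammer_eval_eq_descFactorial R (e a) l).symm
  rw [hB, ← Matrix.det_eval_matrixOfPolynomials_eq_det_vandermonde _ _
    (fun l => descPochhammer_natDegree R l) (fun l => monic_descPochhammer R l)]
  exact Matrix.det_vandermonde_ne_zero_iff.2 fun a b hab => he (by exact_mod_cast hab)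

theorem det_wronskianMatrix_ne_zero {g : Fin m → R[X]} (hg : ∀ a, g a ≠ 0)
    (hinj : Function.Injective fun a => (g a).natDegree) : (wronskianMatrix g).det ≠ 0 := by
  intro h0
  have hcoeff := coeff_det_diagonal_X_pow_mul_wronskianMatrix g
  rw [det_diagonal_X_pow_mul_wronskianMatrix, h0, mul_zero, coeff_zero] at hcoeff
  exact mul_ne_zero (Finset.prod_ne_zero_iff.2 fun a _ => leadingCoeff_ne_zero.2 (hg a))
    (det_of_descFactorial_ne_zero hinj) hcoeff.symm

end Polynomial

section

variable {𝕜 ι : Type*} [NontriviallyNormedField 𝕜] [Fintype ι] (q : ENNReal) [Fact (1 ≤ q)]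

theorem hasDerivAt_toLp_eval (p : ι → 𝕜[X]) (t : 𝕜) :
    HasDerivAt (fun t => WithLp.toLp q fun j => (p j).eval t)
      (WithLp.toLp q fun j => (derivative (p j)).eval t) t :=
  (PiLp.hasFDerivAt_toLp q _).comp_hasDerivAt t (hasDerivAt_pi.2 fun j => (p j).hasDerivAt t)

theorem iteratedDeriv_toLp_eval (p : ι → 𝕜[X]) (i : ℕ) :
    iteratedDeriv i (fun t => WithLp.toLp q fun j => (p j).eval t) =
      fun t => WithLp.toLp q fun j => (derivative^[i] (p j)).eval t := by
  induction i with
  | zero => rfl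
  | succ i ih =>
    ext1 t
    rw [iteratedDeriv_succ, ih, (hasDerivAt_toLp_eval q (fun j => derivative^[i] (p j)) t).deriv]
    simp only [Function.iterate_succ_apply']

end

noncomputable def momentCurve (n : ℕ) (t : ℝ) : EuclideanSpace ℝ (Fin n) :=
  WithLp.toLp 2 fun j => t ^ (j.1 + 1)

noncomputable def momentPolynomial (n : ℕ) : EuclideanSpace ℝ (Fin n) →ₗ[ℝ] ℝ[X] :=
  ∑ j : Fin n, (EuclideanSpace.proj j : EuclideanSpace ℝ (Fin n) →L[ℝ] ℝ).toLinearMap.smulRight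
    (X ^ (j.1 + 1))

theorem momentPolynomial_apply {n : ℕ} (w : EuclideanSpace ℝ (Fin n)) :
    momentPolynomial n w = ∑ j, w j • X ^ (j.1 + 1) := by
  simp [momentPolynomial]

theorem inner_iteratedDeriv_momentCurve {n : ℕ} (w : EuclideanSpace ℝ (Fin n)) (i : ℕ) (t : ℝ) :
    inner ℝ w (iteratedDeriv i (momentCurve n) t) =
      (derivative^[i] (momentPolynomial n w)).eval t := by
  have hΦ : momentCurve n =
      fun t => WithLp.toLp 2 fun j : Fin n => ((X : ℝ[X]) ^ (j.1 + 1)).eval t := by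
    ext1 t; simp [momentCurve]
  rw [hΦ, iteratedDeriv_toLp_eval, momentPolynomial_apply, iterate_derivative_sum]
  simp [PiLp.inner_apply, eval_finsetSum, iterate_derivative_smul, mul_comm]

theorem coeff_derivative_momentPolynomial {n : ℕ} (w : EuclideanSpace ℝ (Fin n)) (j : Fin n) :
    (derivative (momentPolynomial n w)).coeff j = w j * (j + 1) := by
  rw [coeff_derivative, momentPolynomial_apply, finsetSum_coeff]
  simp [coeff_X_pow, Fin.val_inj]

theorem injective_derivative_momentPolynomial (n : ℕ) :
    Function.Injective (derivative ∘ₗ momentPolynomial n) := by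
  refine (injective_iff_map_eq_zero _).2 fun w hw => ?_
  ext j
  simpa [coeff_derivative_momentPolynomial, Nat.cast_add_one_ne_zero] using
    congrArg (coeff · j) hw

theorem natDegree_derivative_momentPolynomial_le {n : ℕ} (w : EuclideanSpace ℝ (Fin n)) :
    (derivative (momentPolynomial n w)).natDegree ≤ n - 1 := by
  refine (natDegree_derivative_le _).trans (Nat.sub_le_sub_right ?_ 1)
  rw [momentPolynomial_apply]
  exact natDegree_sum_le_of_forall_le _ _ fun j _ =>
    (natDegree_smul_le _ _).trans (natDegree_X_pow_le _ |>.trans j.2)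

theorem linearIndependent_of_det_pairing_ne_zero {ι R M : Type*} [Fintype ι] [DecidableEq ι]
    [CommRing R] [IsDomain R] [AddCommGroup M] [Module R M] (f : ι → M →ₗ[R] R) {x : ι → M}
    (h : (Matrix.of fun i j => f i (x j)).det ≠ 0) : LinearIndependent R x :=
  LinearIndependent.of_comp (LinearMap.pi f) (Matrix.linearIndependent_cols_of_det_ne_zero h)

theorem le_finrank_map_orthogonalProjectionOnto {𝕜 E : Type*} [RCLike 𝕜]
    [NormedAddCommGroup E] [InnerProductSpace 𝕜 E] [FiniteDimensional 𝕜 E]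
    (U V : Submodule 𝕜 E) {m : ℕ} {u v : Fin m → E} (hu : ∀ l, u l ∈ U) (hv : ∀ a, v a ∈ V)
    (h : (Matrix.of fun l a => inner 𝕜 (u l) (v a)).det ≠ 0) :
    m ≤ Module.finrank 𝕜 (V.map U.orthogonalProjectionOnto.toLinearMap) := by
  let x : Fin m → V.map U.orthogonalProjectionOnto.toLinearMap := fun a =>
    ⟨U.orthogonalProjectionOnto (v a), Submodule.mem_map_of_mem (hv a)⟩
  have hx : LinearIndependent 𝕜 x := by
    refine linearIndependent_of_det_pairing_ne_zero
      (fun l => (innerSL 𝕜 (⟨u l, hu l⟩ : U)).toLinearMap ∘ₗ Submodule.subtype _) ?_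
    convert h using 3
    ext l a
    exact U.inner_orthogonalProjectionOnto_eq_of_mem_left ⟨u l, hu l⟩ (v a)
  simpa using hx.fintype_card_le_finrank

theorem le_finrank_map_orthogonalProjectionOnto_of_eval_wronskian_ne_zero {n m : ℕ}
    (U V : Submodule ℝ (EuclideanSpace ℝ (Fin n))) {v : Fin m → EuclideanSpace ℝ (Fin n)}
    (hv : ∀ a, v a ∈ V) {g : Fin m → ℝ[X]} (hg : ∀ a, derivative (momentPolynomial n (v a)) = g a)
    {t : ℝ} (hU : ∀ l : Fin m, iteratedDeriv (l + 1) (momentCurve n) t ∈ U)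
    (ht : (wronskianMatrix g).det.eval t ≠ 0) :
    m ≤ Module.finrank ℝ (V.map U.orthogonalProjectionOnto.toLinearMap) := by
  refine le_finrank_map_orthogonalProjectionOnto U V hU hv ?_
  have hmat : (Matrix.of fun l a : Fin m =>
      inner ℝ (iteratedDeriv (l + 1) (momentCurve n) t) (v a)) =
        (evalRingHom t).mapMatrix (wronskianMatrix g) := by
    ext l a
    rw [Matrix.of_apply, real_inner_comm, inner_iteratedDeriv_momentCurve,
      Function.iterate_succ_apply, hg]
    rfl
  rwa [hmat, ← RingHom.map_det]

theorem moment_curve_projection_degeneracy_finite_general (n : ℕ) (k : ℕ)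
    (V : Submodule ℝ (EuclideanSpace ℝ (Fin n))) :
    let Φ : ℝ → EuclideanSpace ℝ (Fin n) := fun t => WithLp.toLp 2 (fun j => t ^ (j.1 + 1))
    let Vk : ℝ → Submodule ℝ (EuclideanSpace ℝ (Fin n)) := fun t =>
      Submodule.span ℝ (Set.range fun i : Fin k => iteratedDeriv (i.1 + 1) Φ t)
    let S : Set ℝ := {t ∈ Set.Icc (0:ℝ) 1 |
      Module.finrank ℝ (V.map (Submodule.orthogonalProjectionOnto (Vk t)).toLinearMap)
        < min (Module.finrank ℝ V) k}
    S.Finite ∧ S.ncard ≤ Nat.factorial (n - 1) := by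
  intro Φ Vk S
  set m := min (Module.finrank ℝ V) k
  let T := derivative ∘ₗ momentPolynomial n
  have hm : m ≤ Module.finrank ℝ (V.map T) := by
    rw [← (Submodule.equivMapOfInjective T (injective_derivative_momentPolynomial n) V).finrank_eq]
    exact min_le_left _ _
  have hdeg : ∀ p ∈ V.map T, p.natDegree ≤ n - 1 := by
    rintro _ ⟨w, -, rfl⟩
    exact natDegree_derivative_momentPolynomial_le w
  obtain ⟨g, hgW, hg0, hgmono⟩ := exists_strictMono_natDegree (V.map T) (n - 1) hdeg hm
  choose v hvV hvg using fun a => Submodule.mem_map.1 (hgW a)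
  set P := (wronskianMatrix g).det
  have hP0 : P ≠ 0 := det_wronskianMatrix_ne_zero hg0 hgmono.injective
  have hPdeg : P.natDegree ≤ (n - 1).factorial :=
    (natDegree_det_wronskianMatrix_le _).trans <| (Fin.sum_sub_sum_val_le_of_strictMono hgmono
      fun a => hdeg _ (hgW a)).trans (Nat.mul_sub_le_factorial _ _)
  have hS : S ⊆ P.rootSet ℝ := by
    rintro t ⟨-, ht⟩
    refine mem_rootSet.2 ⟨hP0, ?_⟩
    by_contra hPt
    refine ht.not_ge <|
      le_finrank_map_orthogonalProjectionOnto_of_eval_wronskian_ne_zero _ V hvV hvg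
        (fun l => Submodule.subset_span ⟨⟨l, l.2.trans_le (min_le_right _ _)⟩, rfl⟩) ?_
    simpa using hPt
  exact ⟨(P.rootSet_finite ℝ).subset hS,
    (Set.ncard_le_ncard hS (P.rootSet_finite ℝ)).trans ((P.ncard_rootSet_le ℝ).trans hPdeg)⟩

/-- For the moment curve `Φ(t) = (t, t², …, tⁿ)` and
`V_k(t) = span(Φ'(t), …, Φ^{(k)}(t))`, and any linear subspace `V ⊆ ℝⁿ` with
`dim V ≤ n-1`, the set of `t ∈ [0,1]` where the orthogonal projection of `V`
onto `V_k(t)` drops dimension below `min(dim V, k)` is finite, with at most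
`(n-1)!` elements. -/
theorem moment_curve_projection_degeneracy_finite (n : ℕ) (hn : 2 ≤ n)
    (k : ℕ) (hk1 : 1 ≤ k) (hk2 : k ≤ n - 1)
    (V : Submodule ℝ (EuclideanSpace ℝ (Fin n)))
    (hV : Module.finrank ℝ V ≤ n - 1) :
    let Φ : ℝ → EuclideanSpace ℝ (Fin n) := fun t => WithLp.toLp 2 (fun j => t ^ (j.1 + 1))
    let Vk : ℝ → Submodule ℝ (EuclideanSpace ℝ (Fin n)) := fun t =>
      Submodule.span ℝ (Set.range fun i : Fin k => iteratedDeriv (i.1 + 1) Φ t)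
    let S : Set ℝ := {t ∈ Set.Icc (0:ℝ) 1 |
      Module.finrank ℝ (V.map (Submodule.orthogonalProjectionOnto (Vk t)).toLinearMap)
        < min (Module.finrank ℝ V) k}
    S.Finite ∧ S.ncard ≤ Nat.factorial (n - 1) :=
  moment_curve_projection_degeneracy_finite_general n k V
end

section
/- For n ≥ 3 and Δ in a punctured left-neighborhood of n+1, define α_j = (Δ-(j+1))/(Δ-j) for 1 ≤ j ≤ n-1 and β_j = 2Δ/((j+1)(Δ-j+1)) for 2 ≤ j ≤ n-1. Consider the linear system ω_j = (1-α_j)η_j + α_j ω_{j+1} (1 ≤ j ≤ n-1), η_j = (1-β_j)((j+1)/j)η_{j-1} + β_j((j+1)/j)ω_j (2 ≤ j ≤ n-1), with boundary data ω_n = θ, η_1 = 2. Then the special values θ* = (Δ-n-1)/(Δ-2) give the explicit solution η_j = 2ω_j = 2(Δ-j-1)/(Δ-2); in particular ω_1(Δ, θ*) = 1. -/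
/-- Explicit solution of the appendix linear system at the special boundary value
`θ* = (Δ-n-1)/(Δ-2)`: the functions `η_j = 2(Δ-j-1)/(Δ-2)`, `ω_j = (Δ-j-1)/(Δ-2)`
satisfy `η₁ = 2`, `ω_n = θ*`, both families of equations, and `ω₁ = 1`. -/
theorem appendix_system_special_solution (n : ℕ) (hn : 3 ≤ n) (Δ : ℝ)
    (h1 : (n : ℝ) < Δ) (h2 : Δ < (n : ℝ) + 1) :
    let ω : ℕ → ℝ := fun j => (Δ - (j : ℝ) - 1) / (Δ - 2)
    let η : ℕ → ℝ := fun j => 2 * (Δ - (j : ℝ) - 1) / (Δ - 2)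
    let θ : ℝ := (Δ - (n : ℝ) - 1) / (Δ - 2)
    η 1 = 2 ∧ ω n = θ ∧
    (∀ j : ℕ, 1 ≤ j → j ≤ n - 1 →
      ω j = (1 - (Δ - ((j : ℝ) + 1)) / (Δ - (j : ℝ))) * η j
            + ((Δ - ((j : ℝ) + 1)) / (Δ - (j : ℝ))) * ω (j + 1)) ∧
    (∀ j : ℕ, 2 ≤ j → j ≤ n - 1 →
      η j = (1 - 2 * Δ / (((j : ℝ) + 1) * (Δ - (j : ℝ) + 1))) * (((j : ℝ) + 1) / (j : ℝ)) * η (j - 1)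
            + (2 * Δ / (((j : ℝ) + 1) * (Δ - (j : ℝ) + 1))) * (((j : ℝ) + 1) / (j : ℝ)) * ω j) ∧
    ω 1 = 1 := by
  intro ω η θ
  have hΔ3 : (3 : ℝ) ≤ Δ := le_trans (by exact_mod_cast hn) h1.le
  have hΔ2 : Δ - 2 ≠ 0 := by linarith
  refine ⟨by simp only [η]; push_cast; field_simp; ring, by simp [ω, θ], ?_, ?_, ?_⟩
  · intro j hj1 hjn
    have hjn' : j + 1 ≤ n := by omega
    have hjd : (j : ℝ) + 1 ≤ n := by exact_mod_cast hjn'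
    have hΔj : Δ - (j : ℝ) ≠ 0 := by linarith
    simp only [ω, η]
    push_cast
    field_simp
    ring
  · intro j hj2 hjn
    have hjn' : j + 1 ≤ n := by omega
    have hjd : (j : ℝ) + 1 ≤ n := by exact_mod_cast hjn'
    have hj2' : (2 : ℝ) ≤ j := by exact_mod_cast hj2
    have hΔj : Δ - (j : ℝ) ≠ 0 := by linarith
    have hΔj1 : Δ - (j : ℝ) + 1 ≠ 0 := by linarith
    have hj0 : (j : ℝ) ≠ 0 := by linarith
    simp only [ω, η]
    rw [Nat.cast_sub (by omega : 1 ≤ j)]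
    push_cast
    field_simp
    ring
  · simp only [ω]
    field_simp
    ring
end

section
/- For n = 3, the solution ω_1(p) of the system ω_1 = (1-α_1)·2 + α_1·ω_2, ω_2 = (1-α_2)η_2 + α_2·0, η_2 = (1-β_2)·(3/2)·2 + β_2·(3/2)·ω_2, where α_1 = (p/3 - 2)/(p/3 - 1), α_2 = (p/3 - 3)/(p/3 - 2), β_2 = (2p/3)/(3(p/3 - 1)), equals ω_1(p) = (9/(p-3))·(1 + (12-p)/(p² - 12p + 18)). Consequently ω_1(p) > 1 for p < 12 sufficiently close to 12. -/
/-!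
The system is linear in `ω₁, ω₂, η₂`. Cleared of denominators it reads
`ω₁ (p - 3) = 6 + (p - 6) ω₂`, `ω₂ (p - 6) = 3 η₂`, `η₂ (p - 3) = p - 9 + p ω₂`, whence
`ω₂ Q = 3 (p - 9)` and `ω₁ Q = 9 (p - 10)` with `Q = p² - 12p + 18`. The stated closed form is the
same `9 (p - 10) / Q` because `Q + 12 - p = (p - 3)(p - 10)`. Where `Q > 0` (for `p > 6 + 3√2 ≈ 10.24`,
so `p₀ = 11` will do) the inequality `ω₁ > 1` is `(p - 9)(p - 12) < 0`.
-/

noncomputable section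

def alphaOne (p : ℝ) : ℝ := (p / 3 - 2) / (p / 3 - 1)

def alphaTwo (p : ℝ) : ℝ := (p / 3 - 3) / (p / 3 - 2)

def betaTwo (p : ℝ) : ℝ := (2 * p / 3) / (3 * (p / 3 - 1))

end

def IsDimThreeSolution (p ω1 ω2 η2 : ℝ) : Prop :=
  ω1 = (1 - alphaOne p) * 2 + alphaOne p * ω2 ∧
  ω2 = (1 - alphaTwo p) * η2 + alphaTwo p * 0 ∧
  η2 = (1 - betaTwo p) * (3 / 2) * 2 + betaTwo p * (3 / 2) * ω2

section Weights

variable {p : ℝ}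

theorem alphaOne_eq (hp : p ≠ 3) : alphaOne p = (p - 6) / (p - 3) := by
  have hp' : p - 3 ≠ 0 := sub_ne_zero.mpr hp
  rw [alphaOne, div_eq_div_iff (by contrapose! hp'; linarith) hp']
  ring

theorem one_sub_alphaTwo (hp : p ≠ 6) : 1 - alphaTwo p = 3 / (p - 6) := by
  have hp' : p - 6 ≠ 0 := sub_ne_zero.mpr hp
  have hq : p / 3 - 2 ≠ 0 := by contrapose! hp'; linarith
  rw [alphaTwo, one_sub_div hq, div_eq_div_iff hq hp']
  ring

theorem betaTwo_eq (hp : p ≠ 3) : betaTwo p = 2 * p / (3 * (p - 3)) := by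
  have hp' : p - 3 ≠ 0 := sub_ne_zero.mpr hp
  rw [betaTwo, div_eq_div_iff (by contrapose! hp'; linarith) (by positivity)]
  ring

end Weights

namespace IsDimThreeSolution

variable {p ω1 ω2 η2 : ℝ}

theorem omega_two_mul (h : IsDimThreeSolution p ω1 ω2 η2) (hp3 : p ≠ 3) (hp6 : p ≠ 6) :
    ω2 * (p ^ 2 - 12 * p + 18) = 3 * (p - 9) := by
  obtain ⟨-, h2, h3⟩ := h
  have hp3' : p - 3 ≠ 0 := sub_ne_zero.mpr hp3
  have hp6' : p - 6 ≠ 0 := sub_ne_zero.mpr hp6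
  rw [mul_zero, add_zero, one_sub_alphaTwo hp6] at h2
  rw [betaTwo_eq hp3] at h3
  have hω2 : ω2 * (p - 6) = 3 * η2 := by
    rw [h2]; field_simp
  have hη2 : η2 * (p - 3) = p - 9 + p * ω2 := by
    field_simp at h3; linear_combination h3
  linear_combination (p - 3) * hω2 + 3 * hη2

theorem omega_one_mul (h : IsDimThreeSolution p ω1 ω2 η2) (hp3 : p ≠ 3) (hp6 : p ≠ 6) :
    ω1 * (p ^ 2 - 12 * p + 18) = 9 * (p - 10) := by
  have hω2 := h.omega_two_mul hp3 hp6
  have hp3' : p - 3 ≠ 0 := sub_ne_zero.mpr hp3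
  have h1 := h.1
  rw [alphaOne_eq hp3] at h1
  have hω1 : ω1 * (p - 3) = 6 + (p - 6) * ω2 := by
    field_simp at h1; linear_combination h1
  apply mul_right_cancel₀ hp3'
  linear_combination (p ^ 2 - 12 * p + 18) * hω1 + (p - 6) * hω2

end IsDimThreeSolution

theorem closed_form_eq_div {p : ℝ} (hp : p ≠ 3) (hQ : p ^ 2 - 12 * p + 18 ≠ 0) :
    (9 / (p - 3)) * (1 + (12 - p) / (p ^ 2 - 12 * p + 18)) =
      9 * (p - 10) / (p ^ 2 - 12 * p + 18) := by
  have hp' : p - 3 ≠ 0 := sub_ne_zero.mpr hp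
  rw [one_add_div hQ, show p ^ 2 - 12 * p + 18 + (12 - p) = (p - 3) * (p - 10) by ring]
  field_simp

theorem one_lt_div_of_mem_Ioo {p : ℝ} (hQ : 0 < p ^ 2 - 12 * p + 18) (h9 : 9 < p) (h12 : p < 12) :
    1 < 9 * (p - 10) / (p ^ 2 - 12 * p + 18) := by
  rw [one_lt_div hQ]
  nlinarith

/-- The `n = 3` case of the appendix system: the solution satisfies
`ω₁(p) = (9/(p-3))(1 + (12-p)/(p²-12p+18))`, and `ω₁(p) > 1` for `p < 12`
sufficiently close to `12`. -/
theorem omega_one_formula_dim_three :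
    ∃ p0 : ℝ, 9 ≤ p0 ∧ p0 < 12 ∧ ∀ p ω1 ω2 η2 : ℝ, p0 < p → p < 12 →
      (ω1 = (1 - (p / 3 - 2) / (p / 3 - 1)) * 2 + ((p / 3 - 2) / (p / 3 - 1)) * ω2 ∧
       ω2 = (1 - (p / 3 - 3) / (p / 3 - 2)) * η2 + ((p / 3 - 3) / (p / 3 - 2)) * 0 ∧
       η2 = (1 - (2 * p / 3) / (3 * (p / 3 - 1))) * (3 / 2) * 2
            + ((2 * p / 3) / (3 * (p / 3 - 1))) * (3 / 2) * ω2) →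
      ω1 = (9 / (p - 3)) * (1 + (12 - p) / (p ^ 2 - 12 * p + 18)) ∧ 1 < ω1 := by
  refine ⟨11, by norm_num, by norm_num, fun p ω1 ω2 η2 hp11 hp12 h ↦ ?_⟩
  have hQ : 0 < p ^ 2 - 12 * p + 18 := by nlinarith
  have hω1 : ω1 = 9 * (p - 10) / (p ^ 2 - 12 * p + 18) := by
    rw [eq_div_iff hQ.ne']
    exact IsDimThreeSolution.omega_one_mul h (by linarith) (by linarith)
  rw [closed_form_eq_div (by linarith) hQ.ne', hω1]
  exact ⟨rfl, one_lt_div_of_mem_Ioo hQ (by linarith) hp12⟩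
end

section
/- Fix n ≥ 3 and Δ = n+1. The solution of the system ω_j = (1-α_j)η_j + α_j ω_{j+1}, η_j = (1-β_j)((j+1)/j)η_{j-1} + β_j((j+1)/j)ω_j with ω_n = 0, η_1 = 2, where α_j = (n-j)/(n+1-j) and β_j = 2(n+1)/((j+1)(n+2-j)), is given by η_j = 2(n-j)/(n-1) and ω_j = (n-j)/(n-1) for all valid j. -/
/-- The appendix system at `Δ = n+1`, `θ = 0` has the explicit solution
`η_j = 2(n-j)/(n-1)`, `ω_j = (n-j)/(n-1)`. -/
theorem appendix_system_solution_at_critical (n : ℕ) (hn : 3 ≤ n) :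
    let ω : ℕ → ℝ := fun j => ((n : ℝ) - (j : ℝ)) / ((n : ℝ) - 1)
    let η : ℕ → ℝ := fun j => 2 * ((n : ℝ) - (j : ℝ)) / ((n : ℝ) - 1)
    η 1 = 2 ∧ ω n = 0 ∧
    (∀ j : ℕ, 1 ≤ j → j ≤ n - 1 →
      ω j = (1 - ((n : ℝ) - (j : ℝ)) / ((n : ℝ) + 1 - (j : ℝ))) * η j
            + (((n : ℝ) - (j : ℝ)) / ((n : ℝ) + 1 - (j : ℝ))) * ω (j + 1)) ∧
    (∀ j : ℕ, 2 ≤ j → j ≤ n - 1 →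
      η j = (1 - 2 * ((n : ℝ) + 1) / (((j : ℝ) + 1) * ((n : ℝ) + 2 - (j : ℝ))))
              * (((j : ℝ) + 1) / (j : ℝ)) * η (j - 1)
            + (2 * ((n : ℝ) + 1) / (((j : ℝ) + 1) * ((n : ℝ) + 2 - (j : ℝ))))
              * (((j : ℝ) + 1) / (j : ℝ)) * ω j) := by
  intro ω η
  have hn3 : (3 : ℝ) ≤ (n : ℝ) := by exact_mod_cast hn
  have hn1 : (n : ℝ) - 1 ≠ 0 := by linarith
  refine ⟨by simp [η]; field_simp, by simp [ω], ?_, ?_⟩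
  · intro j hj1 hjn
    have hjn' : (j : ℝ) ≤ (n : ℝ) - 1 := by
      have : j ≤ n - 1 := hjn
      have : (j : ℝ) ≤ ((n - 1 : ℕ) : ℝ) := by exact_mod_cast this
      rwa [Nat.cast_sub (by omega), Nat.cast_one] at this
    have hd : (n : ℝ) + 1 - (j : ℝ) ≠ 0 := by linarith
    simp only [ω, η, Nat.cast_add, Nat.cast_one]
    field_simp
    ring
  · intro j hj2 hjn
    have hjr : (2 : ℝ) ≤ (j : ℝ) := by exact_mod_cast hj2
    have hjn' : (j : ℝ) ≤ (n : ℝ) - 1 := by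
      have : (j : ℝ) ≤ ((n - 1 : ℕ) : ℝ) := by exact_mod_cast hjn
      rwa [Nat.cast_sub (by omega), Nat.cast_one] at this
    have hj0 : (j : ℝ) ≠ 0 := by linarith
    have hj1 : (j : ℝ) + 1 ≠ 0 := by linarith
    have hd : (n : ℝ) + 2 - (j : ℝ) ≠ 0 := by linarith
    have hcast : ((j - 1 : ℕ) : ℝ) = (j : ℝ) - 1 := by
      rw [Nat.cast_sub (by omega), Nat.cast_one]
    simp only [ω, η, hcast]
    field_simp
    ring
end

section
/- For n ≥ 3 and Δ < n+1 sufficiently close to n+1, the quantity ω_1(Δ, 0), where (ω_j, η_j) solve ω_j = (1-α_j)η_j + α_j ω_{j+1} (1 ≤ j ≤ n-1, ω_n = 0), η_j = (1-β_j)((j+1)/j)η_{j-1} + β_j((j+1)/j)ω_j (2 ≤ j ≤ n-1, η_1 = 2), with α_j = (Δ-(j+1))/(Δ-j) and β_j = 2Δ/((j+1)(Δ-j+1)), satisfies ω_1(Δ, 0) > 1. -/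
/-- Key one-step positivity lemma for the homogeneous system: if `u, v ≥ 0` with
`J·v ≤ (2J-1)·u`, then the next values `u', v'` (determined by the recursions)
satisfy the same kind of bounds with `J+1` in place of `J`. -/
lemma appendix_step (J Δ u v u' v' : ℝ) (hJ : 1 ≤ J) (hΔ : J + 2 ≤ Δ)
    (h1 : (Δ - J - 1) * u' = (Δ - J) * u - v)
    (h2 : (J + 1) * (Δ - J) * v' = ((J + 2) * (Δ - J) - 2 * Δ) * v + 2 * Δ * u')
    (hu : 0 ≤ u) (hv : 0 ≤ v) (hb : J * v ≤ (2 * J - 1) * u) :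
    0 ≤ u' ∧ 0 ≤ v' ∧ (J + 1) * v' ≤ (2 * J + 1) * u' := by
  have hJ0 : 0 < J := by linarith
  have hs2 : 2 ≤ Δ - J := by linarith
  have hnumJ : 0 ≤ J * ((Δ - J) * u - v) := by
    nlinarith [mul_nonneg (mul_nonneg hJ0.le (by linarith : (0:ℝ) ≤ Δ - J - 2)) hu]
  have hnum : 0 ≤ (Δ - J) * u - v := by
    by_contra h
    push_neg at h
    nlinarith [mul_pos hJ0 (neg_pos.mpr h)]
  have hu' : 0 ≤ u' := by
    by_contra h
    push_neg at h
    nlinarith [mul_pos (show (0:ℝ) < Δ - J - 1 by linarith) (neg_pos.mpr h)]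
  have hcoef : 0 ≤ (J + 2) * (Δ - J) - 2 * Δ := by nlinarith
  have hv' : 0 ≤ v' := by
    by_contra h
    push_neg at h
    nlinarith [mul_pos (mul_pos (show (0:ℝ) < J + 1 by linarith)
      (show (0:ℝ) < Δ - J by linarith)) (neg_pos.mpr h),
      mul_nonneg hcoef hv, mul_nonneg (by linarith : (0:ℝ) ≤ 2 * Δ) hu']
  refine ⟨hu', hv', ?_⟩
  have key : (Δ - J) * ((Δ - J - 1) * (J * ((2 * J + 1) * u' - (J + 1) * v'))) =
      (Δ - J) * ((J * (Δ - J) - J - 1) * ((2 * J - 1) * u - J * v) + (J - 1) * u) := by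
    linear_combination (J * ((2 * J + 1) * (Δ - J) - 2 * Δ)) * h1 - (J * (Δ - J - 1)) * h2
  have e1 : 0 ≤ J * (Δ - J) - J - 1 := by
    nlinarith [mul_nonneg hJ0.le (by linarith : (0:ℝ) ≤ Δ - J - 2)]
  have e2 : 0 ≤ (2 * J - 1) * u - J * v := by linarith
  have hrhs : 0 ≤ (Δ - J) * ((J * (Δ - J) - J - 1) * ((2 * J - 1) * u - J * v) + (J - 1) * u) :=
    mul_nonneg (by linarith)
      (add_nonneg (mul_nonneg e1 e2) (mul_nonneg (by linarith) hu))
  by_contra h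
  push_neg at h
  nlinarith [key, hrhs, mul_pos (mul_pos (show (0:ℝ) < Δ - J by linarith)
    (show (0:ℝ) < Δ - J - 1 by linarith))
    (mul_pos hJ0 (show (0:ℝ) < (J + 1) * v' - (2 * J + 1) * u' by linarith))]

set_option maxHeartbeats 2000000 in
/-- Theorem 9.1 (Appendix): for `Δ < n+1` sufficiently close to `n+1`, the solution
of the system with boundary data `ω_n = 0`, `η₁ = 2` satisfies `ω₁(Δ,0) > 1`. -/
theorem appendix_omega_one_gt_one (n : ℕ) (hn : 3 ≤ n) :
    ∃ δ : ℝ, 0 < δ ∧ ∀ Δ : ℝ, (n : ℝ) + 1 - δ < Δ → Δ < (n : ℝ) + 1 →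
      ∀ ω η : ℕ → ℝ, η 1 = 2 → ω n = 0 →
        (∀ j : ℕ, 1 ≤ j → j ≤ n - 1 →
          ω j = (1 - (Δ - ((j : ℝ) + 1)) / (Δ - (j : ℝ))) * η j
                + ((Δ - ((j : ℝ) + 1)) / (Δ - (j : ℝ))) * ω (j + 1)) →
        (∀ j : ℕ, 2 ≤ j → j ≤ n - 1 →
          η j = (1 - 2 * Δ / (((j : ℝ) + 1) * (Δ - (j : ℝ) + 1)))
                  * (((j : ℝ) + 1) / (j : ℝ)) * η (j - 1)
                + (2 * Δ / (((j : ℝ) + 1) * (Δ - (j : ℝ) + 1)))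
                  * (((j : ℝ) + 1) / (j : ℝ)) * ω j) →
        1 < ω 1 := by
  have hn3 : (3:ℝ) ≤ (n:ℝ) := by exact_mod_cast hn
  have hn0 : (0:ℝ) < (n:ℝ) := by linarith
  refine ⟨1 / (n:ℝ), by positivity, ?_⟩
  intro Δ hΔ1 hΔ2 ω η hη1 hωn hrec1 hrec2
  have hinv : 1 / (n:ℝ) ≤ 1 / 3 := by
    rw [div_le_div_iff₀ hn0 (by norm_num)]; linarith
  have hΔgtn : (n:ℝ) + 2/3 ≤ Δ := by linarith
  have hΔ2pos : (0:ℝ) < Δ - 2 := by linarith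
  have hΔ2ne : Δ - 2 ≠ 0 := ne_of_gt hΔ2pos
  have hnΔ : (n:ℝ) * Δ > (n:ℝ) * (n:ℝ) + (n:ℝ) - 1 := by
    have h1n : (n:ℝ) * (1 / (n:ℝ)) = 1 := by field_simp
    nlinarith [mul_lt_mul_of_pos_left hΔ1 hn0]
  by_contra hcon
  push_neg at hcon
  -- the homogeneous differences from the explicit solution ω̄_j = (Δ-j-1)/(Δ-2)
  set u : ℕ → ℝ := fun j => (Δ - (j:ℝ) - 1) / (Δ - 2) - ω j with hu_def
  set v : ℕ → ℝ := fun j => 2 * (Δ - (j:ℝ) - 1) / (Δ - 2) - η j with hv_def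
  -- a cast helper
  have hcast : ∀ j : ℕ, j ≤ n - 1 → (j:ℝ) ≤ (n:ℝ) - 1 := by
    intro j hj
    have h : j + 1 ≤ n := by omega
    have := (Nat.cast_le (α := ℝ)).mpr h
    push_cast at this
    linarith
  -- homogeneous relation from the ω-recursion
  have R1 : ∀ j : ℕ, 1 ≤ j → j ≤ n - 1 →
      (Δ - (j:ℝ) - 1) * u (j+1) = (Δ - (j:ℝ)) * u j - v j := by
    intro j hj1 hjn
    have hjle := hcast j hjn
    have hΔj : Δ - (j:ℝ) ≠ 0 := by
      have : (0:ℝ) < Δ - (j:ℝ) := by linarith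
      linarith
    simp only [hu_def, hv_def]
    push_cast
    rw [hrec1 j hj1 hjn]
    field_simp
    ring
  -- homogeneous relation from the η-recursion
  have R2 : ∀ j : ℕ, 2 ≤ j → j ≤ n - 1 →
      (j:ℝ) * (Δ - (j:ℝ) + 1) * v j
        = (((j:ℝ) + 1) * (Δ - (j:ℝ) + 1) - 2 * Δ) * v (j-1) + 2 * Δ * u j := by
    intro j hj2 hjn
    have hjle := hcast j hjn
    have hj1R : (1:ℝ) ≤ (j:ℝ) := by exact_mod_cast le_trans (by norm_num) hj2
    have hΔj1 : Δ - (j:ℝ) + 1 ≠ 0 := by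
      have : (0:ℝ) < Δ - (j:ℝ) + 1 := by linarith
      linarith
    have hjne : (j:ℝ) ≠ 0 := by linarith
    simp only [hu_def, hv_def]
    rw [Nat.cast_sub (by omega : 1 ≤ j)]
    rw [hrec2 j hj2 hjn]
    push_cast
    field_simp
    ring
  -- base values
  have hv1 : v 1 = 0 := by
    simp only [hv_def]
    rw [hη1]
    push_cast
    field_simp
    ring
  have hu1 : 0 ≤ u 1 := by
    simp only [hu_def]
    push_cast
    have : (Δ - 1 - 1) / (Δ - 2) = 1 := by
      rw [show Δ - 1 - 1 = Δ - 2 by ring, div_self hΔ2ne]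
    rw [this]
    linarith
  -- main induction: positivity and the invariant bound propagate forward
  have main : ∀ j : ℕ, 1 ≤ j → j ≤ n - 1 →
      0 ≤ u j ∧ 0 ≤ v j ∧ (j:ℝ) * v j ≤ (2 * (j:ℝ) - 1) * u j := by
    intro j hj
    induction j, hj using Nat.le_induction with
    | base =>
      intro _
      refine ⟨hu1, le_of_eq hv1.symm, ?_⟩
      rw [hv1]
      push_cast
      linarith
    | succ j hj ih =>
      intro hjn
      have hjn' : j ≤ n - 1 := by omega
      obtain ⟨hu0, hv0, hb⟩ := ih hjn'
      have hj2n : j + 2 ≤ n := by omega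
      have hJ2 : (j:ℝ) + 2 ≤ (n:ℝ) := by exact_mod_cast hj2n
      have h1 := R1 j hj hjn'
      have h2 := R2 (j+1) (by omega) hjn
      simp only [Nat.add_sub_cancel] at h2
      push_cast at h2
      have h2' : ((j:ℝ) + 1) * (Δ - (j:ℝ)) * v (j+1)
          = (((j:ℝ) + 2) * (Δ - (j:ℝ)) - 2 * Δ) * v j + 2 * Δ * u (j+1) := by
        linear_combination h2
      have hJ1 : (1:ℝ) ≤ (j:ℝ) := by exact_mod_cast hj
      obtain ⟨A, B, C⟩ := appendix_step (j:ℝ) Δ (u j) (v j) (u (j+1)) (v (j+1))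
        hJ1 (by linarith) h1 h2' hu0 hv0 hb
      refine ⟨A, B, ?_⟩
      push_cast
      linarith
  -- final contradiction at j = n
  have hlast := main (n-1) (by omega) (le_refl _)
  have h1 := R1 (n-1) (by omega) (le_refl _)
  rw [Nat.cast_sub (by omega : 1 ≤ n)] at h1 hlast
  rw [show n - 1 + 1 = n by omega] at h1
  have hun : u n = (Δ - (n:ℝ) - 1) / (Δ - 2) := by
    simp only [hu_def]
    rw [hωn]
    ring
  have hun_neg : u n < 0 := by
    rw [hun]
    apply div_neg_of_neg_of_pos (by linarith) hΔ2pos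
  obtain ⟨hA, hB, hC⟩ := hlast
  -- coefficient positivity: (n-1)(Δ-n+1) > 2n-3
  have hcpos : (0:ℝ) < ((n:ℝ) - 1) * (Δ - (n:ℝ) + 1) - (2 * (n:ℝ) - 3) := by
    nlinarith [hnΔ]
  have h1' : ((n:ℝ) - 1) * ((Δ - ((n:ℝ) - 1) - 1) * u n)
      = ((n:ℝ) - 1) * ((Δ - ((n:ℝ) - 1)) * u (n-1) - v (n-1)) := by
    linear_combination ((n:ℝ) - 1) * h1
  have hneg : ((n:ℝ) - 1) * ((Δ - ((n:ℝ) - 1) - 1) * u n) < 0 := by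
    apply mul_neg_of_pos_of_neg (by linarith)
    apply mul_neg_of_pos_of_neg (by linarith) hun_neg
  push_cast at h1' hneg hC
  nlinarith [h1', hneg, hC, mul_nonneg hcpos.le hA]
end
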